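/- arXiv:2511.14298 — 3 statements merged into one kernel-verified Lean document; each statement's English description precedes it below -/
import Mathlib

section
/- For every k ≥ 1, every finite poset Q that rainbow forces A_k has at least (k+1 choose 2) elements. -/
/-- A (strong/induced) copy of the poset `P` in the poset `Q`: an injective map
reflecting and preserving the order. -/
def IsCopy {P Q : Type*} [PartialOrder P] [PartialOrder Q] (f : P → Q) : Prop :=
  Function.Injective f ∧ ∀ p p' : P, f p ≤ f p' ↔ p ≤ p'

/-- A proper coloring of a poset: distinct comparable elements get distinct colors. -/
def ProperColoring {Q : Type*} [PartialOrder Q] (c : Q → ℕ) : Prop :=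
  ∀ q q' : Q, q ≠ q' → (q ≤ q' ∨ q' ≤ q) → c q ≠ c q'

/-- `Q` rainbow forces `P`: every proper coloring of `Q` admits a rainbow copy of `P`. -/
def RainbowForces (Q : Type*) [PartialOrder Q] (P : Type*) [PartialOrder P] : Prop :=
  ∀ c : Q → ℕ, ProperColoring c → ∃ f : P → Q, IsCopy f ∧ Function.Injective (c ∘ f)

/-- `Q` minimally rainbow forces `P`: `Q` rainbow forces `P` but no one-element-deleted
induced subposet of `Q` does. -/
def MinRainbowForces (Q : Type*) [PartialOrder Q] (P : Type*) [PartialOrder P] : Prop :=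
  RainbowForces Q P ∧ ∀ q : Q, ¬RainbowForces {x : Q // x ≠ q} P

/-- The antichain poset `A_k` on `k` elements: `Fin k` ordered by equality. -/
def AC (k : ℕ) := Fin k

instance (k : ℕ) : PartialOrder (AC k) where
  le x y := x = y
  le_refl _ := rfl
  le_trans _ _ _ h h' := Eq.trans h h'
  le_antisymm _ _ h _ := h

instance (k : ℕ) : Fintype (AC k) := Fin.fintype k


/-!
A poset rainbow forcing `A_(k+1)` contains an antichain `S` of size `k + 1` (color injectively).
Deleting `S` leaves a poset rainbow forcing `A_k`: a proper coloring of the rest, shifted by one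
and extended by the color `0` on `S`, is proper on the whole poset, and a rainbow copy of
`A_(k+1)` meets `S` at most once, so its other `k` points form a rainbow copy in the rest.
By induction the poset has at least `(k + 1) + (k + 1).choose 2 = (k + 2).choose 2` elements.
-/

lemma AC.le_iff {k : ℕ} {x y : AC k} : x ≤ y ↔ x = y := Iff.rfl

lemma isCopy_AC_iff {Q : Type*} [PartialOrder Q] {k : ℕ} {f : AC k → Q} :
    IsCopy f ↔ ∀ i j, f i ≤ f j → i = j := by
  refine ⟨fun hf i j hij => (hf.2 i j).1 hij, fun hf => ⟨fun i j hij => hf i j hij.le, ?_⟩⟩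
  intro i j
  rw [AC.le_iff]
  exact ⟨hf i j, fun hij => hij ▸ le_rfl⟩

section Coloring

open Classical in
noncomputable def extendByZero {Q : Type*} (S : Set Q) (c : {x // x ∉ S} → ℕ) (q : Q) : ℕ :=
  if hq : q ∈ S then 0 else c ⟨q, hq⟩ + 1

variable {Q : Type*} {S : Set Q} {c : {x // x ∉ S} → ℕ}

lemma extendByZero_of_mem {q : Q} (hq : q ∈ S) : extendByZero S c q = 0 := by
  simp [extendByZero, hq]

lemma extendByZero_of_notMem {q : Q} (hq : q ∉ S) : extendByZero S c q = c ⟨q, hq⟩ + 1 := by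
  simp [extendByZero, hq]

lemma exists_forall_ne_notMem_of_injective {ι : Type*} [Nonempty ι] {f : ι → Q}
    (hf : Function.Injective (extendByZero S c ∘ f)) : ∃ i₀, ∀ i, i ≠ i₀ → f i ∉ S := by
  by_cases hS : ∃ i₀, f i₀ ∈ S
  · obtain ⟨i₀, hi₀⟩ := hS
    refine ⟨i₀, fun i hne hi => hne (hf ?_)⟩
    simp only [Function.comp_apply, extendByZero_of_mem hi, extendByZero_of_mem hi₀]
  · push Not at hS
    exact ⟨Classical.arbitrary ι, fun i _ => hS i⟩

variable [PartialOrder Q]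

lemma ProperColoring.of_injective {c : Q → ℕ} (hc : Function.Injective c) : ProperColoring c :=
  fun _ _ hne _ => hc.ne hne

lemma ProperColoring.extendByZero (hS : IsAntichain (· ≤ ·) S) (hc : ProperColoring c) :
    ProperColoring (extendByZero S c) := by
  intro q q' hne hcomp
  by_cases hq : q ∈ S <;> by_cases hq' : q' ∈ S
  · exact (hcomp.elim (hS hq hq' hne) (hS hq' hq hne.symm)).elim
  · simp [extendByZero_of_mem hq, extendByZero_of_notMem hq']
  · simp [extendByZero_of_notMem hq, extendByZero_of_mem hq']
  · rw [extendByZero_of_notMem hq, extendByZero_of_notMem hq', Ne, Nat.add_right_cancel_iff]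
    exact hc ⟨q, hq⟩ ⟨q', hq'⟩ (fun h => hne (congrArg Subtype.val h)) hcomp

end Coloring

namespace RainbowForces

variable {Q : Type*} [PartialOrder Q] {k : ℕ}

lemma exists_antichain [Countable Q] (h : RainbowForces Q (AC k)) :
    ∃ S : Finset Q, S.card = k ∧ IsAntichain (· ≤ ·) (S : Set Q) := by
  classical
  obtain ⟨c, hc⟩ := Countable.exists_injective_nat Q
  obtain ⟨f, hf, -⟩ := h c (ProperColoring.of_injective hc)
  refine ⟨Finset.univ.image f, ?_, ?_⟩
  · rw [Finset.card_image_of_injective _ hf.1, Finset.card_univ]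
    exact Fintype.card_fin k
  · rintro _ hx _ hy hne hle
    obtain ⟨i, -, rfl⟩ := Finset.mem_image.1 hx
    obtain ⟨j, -, rfl⟩ := Finset.mem_image.1 hy
    exact hne (congrArg f (isCopy_AC_iff.1 hf i j hle))

lemma compl_antichain {S : Set Q} (hS : IsAntichain (· ≤ ·) S)
    (h : RainbowForces Q (AC (k + 1))) : RainbowForces {x // x ∉ S} (AC k) := by
  intro c hc
  obtain ⟨f, hf, hrainbow⟩ := h _ (hc.extendByZero hS)
  obtain ⟨i₀, hi₀⟩ := exists_forall_ne_notMem_of_injective (ι := Fin (k + 1)) hrainbow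
  have hmem (j : Fin k) : f (i₀.succAbove j) ∉ S := hi₀ _ (i₀.succAbove_ne j)
  refine ⟨fun j => ⟨f (i₀.succAbove j), hmem j⟩, isCopy_AC_iff.2 fun i j hij => ?_, ?_⟩
  · exact Fin.succAbove_right_injective (p := i₀) (isCopy_AC_iff.1 hf _ _ hij)
  · intro i j hij
    refine Fin.succAbove_right_injective (p := i₀) (hrainbow ?_)
    show extendByZero S c (f _) = extendByZero S c (f _)
    rw [extendByZero_of_notMem (hmem i), extendByZero_of_notMem (hmem j)]
    exact congrArg (· + 1) hij

theorem choose_two_le_card [Fintype Q] (h : RainbowForces Q (AC k)) :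
    (k + 1).choose 2 ≤ Fintype.card Q := by
  induction k generalizing Q with
  | zero => simp
  | succ k ih =>
    classical
    obtain ⟨S, hcard, hS⟩ := h.exists_antichain
    have hrest := ih (h.compl_antichain hS)
    rw [Fintype.card_subtype_compl] at hrest
    simp only [Finset.mem_coe, Fintype.card_coe] at hrest
    have hpascal : (k + 1 + 1).choose 2 = (k + 1) + (k + 1).choose 2 := by
      rw [Nat.choose_succ_succ', Nat.choose_one_right]
    have hSle := S.card_le_univ
    omega

end RainbowForces

theorem statement3_general (k : ℕ) (Q : Type) [PartialOrder Q] [Fintype Q]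
    (h : RainbowForces Q (AC k)) :
    (k + 1).choose 2 ≤ Fintype.card Q :=
  h.choose_two_le_card

/-- For every `k ≥ 1`, every finite poset `Q` that rainbow forces the
antichain `A_k` has at least `(k+1).choose 2` elements. -/
theorem statement3 (k : ℕ) (hk : 1 ≤ k) (Q : Type) [PartialOrder Q] [Fintype Q]
    (h : RainbowForces Q (AC k)) :
    (k + 1).choose 2 ≤ Fintype.card Q :=
  statement3_general k Q h
end

section
/- If P is a finite poset on k elements that is not an antichain (i.e. there exist distinct p, q in P with p ≤ q), then there exists a finite poset Q with fewer than (k+1 choose 2) elements that rainbow forces P. -/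
/-- A bundled finite poset. -/
structure FinPoset where
  carrier : Type
  [po : PartialOrder carrier]
  [ft : Fintype carrier]

attribute [instance] FinPoset.po FinPoset.ft

/-!
Fix any linear order `ι` on `P` and replace each `p` by a chain of length one more than the
number of `ι`-earlier elements incomparable with `p`, ordered lexicographically. Choosing one
point in each chain always gives a copy of `P`, and comparable points of a copy get distinct
colours from any proper colouring. Going through `P` along `ι`, each chain has more colours
than there are earlier incomparable choices to avoid, so a greedy choice is rainbow. The chains
have `k + m` elements in total, `m` the number of incomparable pairs, and `m < k.choose 2`
because `P` has a comparable pair.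
-/

open Finset

section Coloring

variable {Q : Type*} [PartialOrder Q] {c : Q → ℕ}

theorem ProperColoring.injective_comp_strictMono {β : Type*} [LinearOrder β] {f : β → Q}
    (hc : ProperColoring c) (hf : StrictMono f) : Function.Injective (c ∘ f) := by
  intro i j hij
  by_contra hne
  exact hc _ _ (hf.injective.ne hne) ((le_total i j).imp (hf.monotone ·) (hf.monotone ·)) hij

theorem ProperColoring.exists_apply_notMem {β : Type*} [LinearOrder β] [Fintype β] {f : β → Q}
    (hc : ProperColoring c) (hf : StrictMono f) (F : Finset ℕ) (hF : #F < Fintype.card β) :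
    ∃ i, c (f i) ∉ F := by
  classical
  have hcard : #F < #(univ.image (c ∘ f)) := by
    rwa [card_image_of_injective _ (hc.injective_comp_strictMono hf), card_univ]
  obtain ⟨_, hmem, hnot⟩ := exists_mem_notMem_of_card_lt_card hcard
  obtain ⟨i, -, rfl⟩ := mem_image.mp hmem
  exact ⟨i, hnot⟩

end Coloring

section LexSigma

variable {P : Type*} [PartialOrder P] {α : P → Type*} [∀ p, PartialOrder (α p)]

theorem Sigma.Lex.strictMono_toLex_mk (p : P) :
    StrictMono fun a : α p => toLex (⟨p, a⟩ : Σ p, α p) :=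
  fun _ _ h => Sigma.Lex.lt_def.mpr (Or.inr ⟨rfl, h⟩)

theorem isCopy_toLex_mk (σ : ∀ p, α p) :
    IsCopy fun p => toLex (⟨p, σ p⟩ : Σ p, α p) := by
  refine ⟨fun p q h => congrArg Sigma.fst (toLex.injective h),
    fun p q => ⟨fun h => ?_, fun h => ?_⟩⟩
  · rcases Sigma.Lex.le_def.mp h with h | ⟨h, -⟩
    exacts [h.le, h.le]
  · rcases h.eq_or_lt with rfl | h
    exacts [le_rfl, Sigma.Lex.le_def.mpr (Or.inl h)]

end LexSigma

section Greedy

variable {P : Type*} [PartialOrder P] [Fintype P] {β : Type*} [LinearOrder β]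

open Classical in
noncomputable def earlierIncomp (ι : P → β) (p : P) : Finset P :=
  {r | ι r < ι p ∧ IncompRel (· ≤ ·) r p}

variable {α : P → Type*} [∀ p, LinearOrder (α p)] [∀ p, Fintype (α p)]

theorem exists_section_colors_ne_of_incompRel (ι : P → β) (hι : Function.Injective ι)
    (hs : ∀ p, #(earlierIncomp ι p) < Fintype.card (α p))
    {c : (Σₗ p, α p) → ℕ} (hc : ProperColoring c) :
    ∃ σ : ∀ p, α p, ∀ p q, IncompRel (· ≤ ·) p q →
      c (toLex ⟨p, σ p⟩) ≠ c (toLex ⟨q, σ q⟩) := by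
  classical
  suffices h : ∀ S : Finset P, ∃ σ : ∀ p, α p, ∀ p ∈ S, ∀ q ∈ S, ι q < ι p →
      IncompRel (· ≤ ·) p q → c (toLex ⟨p, σ p⟩) ≠ c (toLex ⟨q, σ q⟩) by
    obtain ⟨σ, hσ⟩ := h univ
    refine ⟨σ, fun p q hpq => ?_⟩
    rcases lt_or_gt_of_ne (hι.ne fun h => hpq.1 h.le) with h | h
    · exact (hσ q (mem_univ _) p (mem_univ _) h hpq.symm).symm
    · exact hσ p (mem_univ _) q (mem_univ _) h hpq
  intro S
  induction S using Finset.induction_on_max_value ι with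
  | empty =>
    have (p : P) : Nonempty (α p) := Fintype.card_pos_iff.mp (Nat.zero_lt_of_lt (hs p))
    exact ⟨fun p => Classical.choice (this p), by simp⟩
  | insert a S haS hmax ih =>
    obtain ⟨σ, hσ⟩ := ih
    let F : Finset ℕ :=
      {q ∈ S | IncompRel (· ≤ ·) q a}.image fun q => c (toLex ⟨q, σ q⟩)
    have hF : #F < Fintype.card (α a) := by
      refine (card_image_le.trans (card_le_card fun q hq => ?_)).trans_lt (hs a)
      simp only [mem_filter, earlierIncomp, mem_univ, true_and] at hq ⊢
      exact ⟨(hmax q hq.1).lt_of_ne (hι.ne fun h => haS (h ▸ hq.1)), hq.2⟩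
    obtain ⟨i, hi⟩ := hc.exists_apply_notMem (Sigma.Lex.strictMono_toLex_mk a) F hF
    refine ⟨Function.update σ a i, ?_⟩
    intro p hp q hq hqp hpq
    have hq' : q ≠ a := by
      rintro rfl
      rcases mem_insert.mp hp with rfl | hp
      exacts [hqp.false, (hmax p hp).not_gt hqp]
    rw [Function.update_of_ne hq']
    rcases mem_insert.mp hp with rfl | hp
    · rw [Function.update_self]
      have hqF : q ∈ {q ∈ S | IncompRel (· ≤ ·) q p} :=
        mem_filter.mpr ⟨(mem_insert.mp hq).resolve_left hq', hpq.symm⟩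
      exact fun h => hi (mem_image.mpr ⟨q, hqF, h.symm⟩)
    · rw [Function.update_of_ne (ne_of_mem_of_not_mem hp haS)]
      exact hσ p hp q ((mem_insert.mp hq).resolve_left hq') hqp hpq

theorem rainbowForces_lex_sigma (ι : P → β) (hι : Function.Injective ι)
    (hs : ∀ p, #(earlierIncomp ι p) < Fintype.card (α p)) :
    RainbowForces (Σₗ p, α p) P := by
  intro c hc
  obtain ⟨σ, hσ⟩ := exists_section_colors_ne_of_incompRel ι hι hs hc
  have hcopy := isCopy_toLex_mk σ
  refine ⟨_, hcopy, fun p q hpq => ?_⟩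
  by_contra hne
  by_cases hcomp : p ≤ q ∨ q ≤ p
  · exact hc _ _ (hcopy.1.ne hne) (hcomp.imp (hcopy.2 p q).mpr (hcopy.2 q p).mpr) hpq
  · exact hσ p q (not_or.mp hcomp) hpq

end Greedy

section Counting

theorem sum_card_filter_lt_equivFin {P : Type*} [Fintype P] {n : ℕ} (e : P ≃ Fin n) :
    ∑ p, #{r | e r < e p} = n.choose 2 := by
  have hcard (i : Fin n) : #{r | e r < i} = i := by
    rw [card_equiv e (t := Iio i) (by simp), Fin.card_Iio]
  rw [← e.symm.sum_comp]
  simp only [Equiv.apply_symm_apply, hcard]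
  rw [Fin.sum_univ_eq_sum_range (fun i => i) n, sum_range_id, Nat.choose_two_right]

variable {P : Type*} [PartialOrder P] [Fintype P] {β : Type*} [LinearOrder β]

theorem earlierIncomp_subset (ι : P → β) (p : P) :
    earlierIncomp ι p ⊆ ({r | ι r < ι p} : Finset P) := fun r hr => by
  simp only [earlierIncomp, mem_filter] at hr ⊢
  exact ⟨hr.1, hr.2.1⟩

theorem card_earlierIncomp_lt (ι : P → β) {p q : P} (hqp : ι q < ι p)
    (hcomp : q ≤ p ∨ p ≤ q) :
    #(earlierIncomp ι p) < #{r | ι r < ι p} := by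
  refine card_lt_card ((ssubset_iff_of_subset (earlierIncomp_subset ι p)).mpr ⟨q, ?_, ?_⟩)
  · simpa using hqp
  · classical
    intro hq
    have hincomp := (mem_filter.mp hq).2.2
    exact hcomp.elim hincomp.1 hincomp.2

theorem sum_card_earlierIncomp_lt {n : ℕ} (e : P ≃ Fin n)
    (h : ∃ p q : P, p ≠ q ∧ p ≤ q) :
    ∑ p, #(earlierIncomp e p) < n.choose 2 := by
  obtain ⟨p, q, hne, hle⟩ := h
  obtain ⟨a, b, hba, hcomp⟩ : ∃ a b, e b < e a ∧ (b ≤ a ∨ a ≤ b) := by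
    rcases lt_or_gt_of_ne (e.injective.ne hne) with h | h
    exacts [⟨q, p, h, Or.inl hle⟩, ⟨p, q, h, Or.inr hle⟩]
  calc ∑ p, #(earlierIncomp e p) < ∑ p, #{r | e r < e p} :=
        sum_lt_sum (fun p _ => card_le_card (earlierIncomp_subset e p))
          ⟨a, mem_univ _, card_earlierIncomp_lt e hba hcomp⟩
    _ = n.choose 2 := sum_card_filter_lt_equivFin e

end Counting

/-- If `P` is a finite poset on `k` elements that is not an antichain, then
there is a finite poset `Q` with fewer than `(k+1).choose 2` elements that rainbow forces `P`. -/
theorem statement4 (P : Type) [PartialOrder P] [Fintype P] (k : ℕ)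
    (hk : Fintype.card P = k) (h : ∃ p q : P, p ≠ q ∧ p ≤ q) :
    ∃ Q : FinPoset, Fintype.card Q.carrier < (k + 1).choose 2 ∧
      RainbowForces Q.carrier P := by
  classical
  let e := Fintype.equivFin P
  refine ⟨⟨Σₗ p, Fin (#(earlierIncomp e p) + 1)⟩, ?_,
    rainbowForces_lex_sigma e e.injective fun p => by simp⟩
  calc Fintype.card (Σₗ p, Fin (#(earlierIncomp e p) + 1))
      = ∑ p, #(earlierIncomp e p) + k := by
        simp [Fintype.card_lex, Fintype.card_sigma, sum_add_distrib, hk]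
    _ < k.choose 2 + k := by
        gcongr; exact hk ▸ sum_card_earlierIncomp_lt e h
    _ = (k + 1).choose 2 := by
        rw [Nat.choose_succ_succ, Nat.choose_one_right, add_comm]
end

section
/- A finite poset Q minimally rainbow forces the poset ∨ if and only if Q is order-isomorphic to J, where ∨ is the 3-element poset {a, b, c} with a < b, a < c and b, c incomparable, and J is the 4-element poset {z, u, v₁, v₂} with z < u, z < v₁ < v₂, z < v₂, and u incomparable to v₁ and v₂. -/
/-- The order relation of the `∨` poset: `0 < 1`, `0 < 2`, and `1, 2` incomparable. -/
def VeeRel (x y : Fin 3) : Prop := x.val = y.val ∨ (x.val = 0 ∧ y.val ≠ 0)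

instance : DecidableRel VeeRel := fun x y => by unfold VeeRel; infer_instance

/-- The `∨` poset: the 3-element poset `{a, b, c}` (`a = 0`, `b = 1`, `c = 2`) with
`a < b`, `a < c` and `b, c` incomparable. -/
def Vee := Fin 3

instance : DecidableEq Vee := instDecidableEqFin 3
instance : Fintype Vee := Fin.fintype 3

instance : PartialOrder Vee where
  le := VeeRel
  le_refl _ := Or.inl rfl
  le_trans := by show ∀ a b c : Fin 3, VeeRel a b → VeeRel b c → VeeRel a c; decide
  le_antisymm := by show ∀ a b : Fin 3, VeeRel a b → VeeRel b a → a = b; decide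

/-- The order relation of `J`: `0 < 1`, `0 < 2 < 3`, and `1` incomparable to `2, 3`. -/
def Jrel (x y : Fin 4) : Prop :=
  x.val = y.val ∨ (x.val = 0 ∧ y.val ≠ 0) ∨ (x.val = 2 ∧ y.val = 3)

instance : DecidableRel Jrel := fun x y => by unfold Jrel; infer_instance

/-- `J`: the 4-element poset `{z, u, v₁, v₂}` (`z = 0`, `u = 1`, `v₁ = 2`, `v₂ = 3`) with
`z < u`, `z < v₁ < v₂`, `z < v₂`, and `u` incomparable to `v₁` and `v₂`. -/
def J := Fin 4

instance : DecidableEq J := instDecidableEqFin 4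
instance : Fintype J := Fin.fintype 4

instance : PartialOrder J where
  le := Jrel
  le_refl _ := Or.inl rfl
  le_trans := by show ∀ a b c : Fin 4, Jrel a b → Jrel b c → Jrel a c; decide
  le_antisymm := by show ∀ a b : Fin 4, Jrel a b → Jrel b a → a = b; decide

/-!
A copy of `J` forces a rainbow `∨`: its chain `z < v₁ < v₂` gets three colours, so the colour
of `u` differs from that of `v₁` or of `v₂`, and `z` together with `u` and that point is a
rainbow `∨`. Conversely, colour `Q` by the classes of the equivalence relation generated by
"`x` and `y` are the two maximal points of a `∨`". No `∨` is then rainbow, and if `Q` has no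
copy of `J` the colouring is proper: in a chain of such pairs from `x` to some `y > x`, the step
from the last point `v₁ < y` goes to a point `u` incomparable to `y`, and `u`, `v₁`, `y` with a
common lower bound of `u` and `v₁` form a copy of `J`. So `Q` rainbow forces `∨` exactly
when it contains a copy of `J`, and the minimal such posets are the copies of `J`.
-/

open Function Relation

instance : DecidableLE J := inferInstanceAs (DecidableRel Jrel)

instance : DecidableLE Vee := inferInstanceAs (DecidableRel VeeRel)

def Vee.a : Vee := (0 : Fin 3)
def Vee.b : Vee := (1 : Fin 3)
def Vee.c : Vee := (2 : Fin 3)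

def J.z : J := (0 : Fin 4)
def J.u : J := (1 : Fin 4)
def J.v₁ : J := (2 : Fin 4)
def J.v₂ : J := (3 : Fin 4)

section RainbowForcing

variable {P Q R : Type*} [PartialOrder P] [PartialOrder Q] [PartialOrder R]

theorem IsCopy.of_le_iff {f : P → Q} (hf : ∀ p p', f p ≤ f p' ↔ p ≤ p') : IsCopy f :=
  ⟨fun p p' h => le_antisymm ((hf p p').1 h.le) ((hf p' p).1 h.ge), hf⟩

theorem IsCopy.comp {g : Q → R} {f : P → Q} (hg : IsCopy g) (hf : IsCopy f) : IsCopy (g ∘ f) :=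
  ⟨hg.1.comp hf.1, fun p p' => (hg.2 _ _).trans (hf.2 p p')⟩

theorem ProperColoring.comp_isCopy {c : R → ℕ} {g : Q → R} (hc : ProperColoring c)
    (hg : IsCopy g) : ProperColoring (c ∘ g) := fun q q' hne hcomp =>
  hc _ _ (hg.1.ne hne) (hcomp.imp (hg.2 q q').2 (hg.2 q' q).2)

theorem RainbowForces.of_isCopy {g : Q → R} (hQ : RainbowForces Q P) (hg : IsCopy g) :
    RainbowForces R P := fun c hc => by
  obtain ⟨f, hf, hrainbow⟩ := hQ (c ∘ g) (hc.comp_isCopy hg)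
  exact ⟨g ∘ f, hg.comp hf, hrainbow⟩

theorem nonempty_orderIso_iff_isCopy_and_not_isCopy_erase [Finite P] :
    Nonempty (Q ≃o P) ↔
      (∃ f : P → Q, IsCopy f) ∧ ∀ q : Q, ¬∃ f : P → {x : Q // x ≠ q}, IsCopy f := by
  constructor
  · rintro ⟨e⟩
    refine ⟨⟨e.symm, e.symm.injective, fun _ _ => e.symm.le_iff_le⟩, ?_⟩
    rintro q ⟨f, hf⟩
    obtain ⟨p, hp⟩ := Finite.surjective_of_injective
      (e.injective.comp (Subtype.val_injective.comp hf.1)) (e q)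
    exact (f p).2 (e.injective hp)
  · rintro ⟨⟨f, hf⟩, hminimal⟩
    have hsurj : Surjective f := fun q => by
      by_contra! hq
      exact hminimal q ⟨fun p => ⟨f p, hq p⟩, IsCopy.of_le_iff hf.2⟩
    exact ⟨(OrderIso.ofSurjective (OrderEmbedding.ofMapLEIff f hf.2) hsurj).symm⟩

theorem isCopy_vee {a b d : Q} (hab : a ≤ b) (had : a ≤ d) (hbd : ¬b ≤ d) (hdb : ¬d ≤ b) :
    IsCopy (fun i : Vee => ![a, b, d] i) := by
  have hba : ¬b ≤ a := fun h => hbd (h.trans had)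
  have hda : ¬d ≤ a := fun h => hdb (h.trans hab)
  refine IsCopy.of_le_iff fun p p' => ?_
  change _ ↔ VeeRel p p'
  fin_cases p <;> fin_cases p' <;> simp [VeeRel, hab, had, hbd, hdb, hba, hda]

theorem ProperColoring.exists_rainbow_copy_vee {c : Q → ℕ} (hc : ProperColoring c) {a b d : Q}
    (hab : a ≤ b) (had : a ≤ d) (hbd : ¬b ≤ d) (hdb : ¬d ≤ b) (hcbd : c b ≠ c d) :
    ∃ f : Vee → Q, IsCopy f ∧ Injective (c ∘ f) := by
  have hcab : c a ≠ c b := hc a b (by rintro rfl; exact hbd had) (Or.inl hab)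
  have hcad : c a ≠ c d := hc a d (by rintro rfl; exact hdb hab) (Or.inl had)
  refine ⟨_, isCopy_vee hab had hbd hdb, fun i j hij => ?_⟩
  simp only [Function.comp_apply] at hij
  fin_cases i <;> fin_cases j <;> first | rfl | simp_all [eq_comm]

theorem rainbowForces_J_vee : RainbowForces J Vee := by
  intro c hc
  by_cases h : c J.u = c J.v₁
  · refine hc.exists_rainbow_copy_vee (a := J.z) (b := J.u) (d := J.v₂)
      (by decide) (by decide) (by decide) (by decide) ?_
    rw [h]
    exact hc _ _ (by decide) (Or.inl (by decide))
  · exact hc.exists_rainbow_copy_vee (a := J.z) (b := J.u) (d := J.v₁)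
      (by decide) (by decide) (by decide) (by decide) h

theorem isCopy_J {z u v₁ v₂ : Q} (hzu : z ≤ u) (hzv₁ : z ≤ v₁) (hv₁v₂ : v₁ < v₂)
    (hv₁u : ¬v₁ ≤ u) (huv₂ : ¬u ≤ v₂) (hv₂u : ¬v₂ ≤ u) :
    IsCopy (fun j : J => ![z, u, v₁, v₂] j) := by
  have huv₁ : ¬u ≤ v₁ := fun h => huv₂ (h.trans hv₁v₂.le)
  have huz : ¬u ≤ z := fun h => huv₁ (h.trans hzv₁)
  have hv₁z : ¬v₁ ≤ z := fun h => hv₁u (h.trans hzu)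
  have hv₂z : ¬v₂ ≤ z := fun h => hv₂u (h.trans hzu)
  refine IsCopy.of_le_iff fun p p' => ?_
  change _ ↔ Jrel p p'
  fin_cases p <;> fin_cases p' <;>
    simp [Jrel, hzu, hzv₁, hzv₁.trans hv₁v₂.le, hv₁v₂.le, hv₁v₂.not_ge, hv₁u, huv₁, huv₂, hv₂u,
      huz, hv₁z, hv₂z]

def VeeTops (x y : Q) : Prop := ¬x ≤ y ∧ ¬y ≤ x ∧ ∃ a, a ≤ x ∧ a ≤ y

instance : Std.Symm (VeeTops (Q := Q)) where
  symm _ _ := fun ⟨hxy, hyx, a, hax, hay⟩ => ⟨hyx, hxy, a, hay, hax⟩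

theorem not_rainbowForces_vee_of_veeTops {c : Q → ℕ} (hc : ProperColoring c)
    (hcol : ∀ x y, VeeTops x y → c x = c y) : ¬RainbowForces Q Vee := by
  intro hQ
  obtain ⟨f, hf, hrainbow⟩ := hQ c hc
  have htops : VeeTops (f Vee.b) (f Vee.c) :=
    ⟨fun h => absurd ((hf.2 _ _).1 h) (by decide), fun h => absurd ((hf.2 _ _).1 h) (by decide),
      f Vee.a, (hf.2 _ _).2 (by decide), (hf.2 _ _).2 (by decide)⟩
  exact absurd (hrainbow (hcol _ _ htops)) (by decide)

theorem eq_of_reflTransGen_veeTops_of_le (hJ : ∀ f : J → Q, ¬IsCopy f) {x y : Q}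
    (hxy : ReflTransGen VeeTops x y) (hle : x ≤ y) : x = y := by
  induction hxy using ReflTransGen.head_induction_on with
  | refl => rfl
  | @head x w hxw _ ih =>
    obtain ⟨hxw, -, a, hax, haw⟩ := hxw
    by_contra hne
    by_cases hwy : w ≤ y
    · exact hxw (ih hwy ▸ hle)
    by_cases hyw : y ≤ w
    · exact hxw (hle.trans hyw)
    exact hJ _ (isCopy_J haw hax (hle.lt_of_ne hne) hxw hwy hyw)

theorem not_rainbowForces_vee_of_forall_not_isCopy_J [Countable Q]
    (hJ : ∀ f : J → Q, ¬IsCopy f) : ¬RainbowForces Q Vee := by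
  obtain ⟨code, hcode⟩ := exists_injective_nat (Quot (VeeTops (Q := Q)))
  refine not_rainbowForces_vee_of_veeTops (c := fun x => code (Quot.mk _ x)) ?_
    fun x y h => congrArg code (Quot.sound h)
  intro x y hne hcomp hcxy
  have hxy : ReflTransGen VeeTops x y := by
    rw [← EqvGen.eqvGen_eq_reflTransGen]
    exact Quot.eqvGen_exact (hcode hcxy)
  rcases hcomp with h | h
  · exact hne (eq_of_reflTransGen_veeTops_of_le hJ hxy h)
  · exact hne (eq_of_reflTransGen_veeTops_of_le hJ (symm hxy) h).symm

theorem rainbowForces_vee_iff_exists_isCopy_J [Countable Q] :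
    RainbowForces Q Vee ↔ ∃ f : J → Q, IsCopy f := by
  refine ⟨fun hQ => ?_, fun ⟨f, hf⟩ => rainbowForces_J_vee.of_isCopy hf⟩
  by_contra! hJ
  exact not_rainbowForces_vee_of_forall_not_isCopy_J hJ hQ

end RainbowForcing

/-- A finite poset `Q` minimally rainbow forces the poset `∨` if and only if
`Q` is order-isomorphic to `J`. -/
theorem statement8 (Q : Type) [PartialOrder Q] [Fintype Q] :
    MinRainbowForces Q Vee ↔ Nonempty (Q ≃o J) := by
  simp only [MinRainbowForces, rainbowForces_vee_iff_exists_isCopy_J,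
    nonempty_orderIso_iff_isCopy_and_not_isCopy_erase]
end
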